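/- Let A be an ordered commutative monoid with generating pair (g₊, g₋). For x, y ∈ A, the following are equivalent: (1) for all rational ε > 0 there exist n, k ∈ ℕ with k ≤ εn and nx + k·g₊ ≥ ny + k·g₋; (2) f(x) ≥ f(y) for every functional f : A → ℝ. -/

import Mathlib

/-
(1) ⇒ (2) is immediate: a functional turns `n • y + k • g₋ ≤ n • x + k • g₊` into
`f y - f x ≤ ε (f g₊ - f g₋)` for every rational `ε > 0`.

(2) ⇒ (1): suppose (1) fails for some `ε`. In the Grothendieck group of `A` the differences
`b - a` with `a ≤ b` form a positive cone `C`, for which `u = g₊ - g₋` is an order unit. An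
inequality in the group only holds in `A` after adding some `d`, but the generating pair absorbs `d`
at a cost that becomes negligible after scaling; so the failure of (1) persists in the group, which
makes the gauge `q w = inf {k / n | k • u - n • w ∈ C}` at least `ε / 2` at `y - x`. A Hahn–Banach
argument for abelian groups (Zorn's lemma on subgroups of `G × ℝ` lying below the graph of `q`)
gives an additive `s ≤ q` with `s (y - x) = q (y - x) > 0`. It is nonnegative on `C`, so composing
it with `A → G` gives a functional with `f x < f y`.
-/

open scoped Pointwise

lemma nonpos_of_forall_rat_le_mul {a D : ℝ} (hD : 0 ≤ D) (h : ∀ e : ℚ, 0 < e → a ≤ e * D) :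
    a ≤ 0 := by
  by_contra! ha
  obtain ⟨e, he₀, he⟩ := exists_rat_btwn (div_pos ha (by linarith : 0 < D + 1))
  rw [lt_div_iff₀ (by linarith)] at he
  have := h e (by exact_mod_cast he₀)
  nlinarith

section EasyDirection

variable {A : Type*} [AddCommMonoid A] [Preorder A] {gp gm x y : A}

lemma le_of_forall_exists_nsmul_add_le (f : A →+ ℝ) (hf : Monotone f) (hge : gm ≤ gp)
    (h : ∀ e : ℚ, 0 < e → ∃ n k : ℕ, 0 < n ∧ (k : ℚ) ≤ e * n ∧ n • y + k • gm ≤ n • x + k • gp) :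
    f y ≤ f x := by
  have hD : 0 ≤ f gp - f gm := sub_nonneg.mpr (hf hge)
  suffices f y - f x ≤ 0 by linarith
  refine nonpos_of_forall_rat_le_mul hD fun e he => ?_
  obtain ⟨n, k, hn, hk, hle⟩ := h e he
  have hmono := hf hle
  simp only [map_add, map_nsmul, nsmul_eq_mul] at hmono
  have hk' : (k : ℝ) ≤ e * n := by exact_mod_cast hk
  have hn' : (0 : ℝ) < n := by exact_mod_cast hn
  have : n * (f y - f x) ≤ n * (e * (f gp - f gm)) := by nlinarith
  exact le_of_mul_le_mul_left this hn'

end EasyDirection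

section OrderedMonoid

variable {A : Type*} [AddCommMonoid A] [PartialOrder A] [IsOrderedAddMonoid A]

structure IsGeneratingPair (gp gm : A) : Prop where
  le : gm ≤ gp
  exists_nsmul : ∀ x : A, ∃ n : ℕ, x + n • gm ≤ n • gp ∧ n • gm ≤ n • gp + x

lemma nsmul_add_le_nsmul_add {a b d : A} (h : a + d ≤ b + d) (N : ℕ) : N • a + d ≤ N • b + d := by
  induction N with
  | zero => simp
  | succ N ih =>
    calc (N + 1) • a + d = a + (N • a + d) := by rw [succ_nsmul]; abel
      _ ≤ a + (N • b + d) := by gcongr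
      _ = N • b + (a + d) := by abel
      _ ≤ N • b + (b + d) := by gcongr
      _ = (N + 1) • b + d := by rw [succ_nsmul]; abel

lemma add_nsmul_le_add_nsmul_of_add_le_add {a b d gp gm : A} {m : ℕ}
    (hd₁ : d + m • gm ≤ m • gp) (hd₂ : m • gm ≤ m • gp + d) (h : a + d ≤ b + d) :
    a + (2 * m) • gm ≤ b + (2 * m) • gp :=
  calc a + (2 * m) • gm = a + m • gm + m • gm := by rw [two_mul, add_nsmul, add_assoc]
    _ ≤ a + m • gm + (m • gp + d) := by gcongr
    _ = (a + d) + (m • gm + m • gp) := by abel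
    _ ≤ (b + d) + (m • gm + m • gp) := by gcongr
    _ = b + m • gp + (d + m • gm) := by abel
    _ ≤ b + m • gp + m • gp := by gcongr
    _ = b + (2 * m) • gp := by rw [two_mul, add_nsmul, add_assoc]

lemma exists_nsmul_le_of_add_le_add {gp gm x y d : A} (hg : IsGeneratingPair gp gm)
    {ε : ℚ} (hε : 0 < ε) {n k : ℕ} (hn : 0 < n) (hk : 2 * k ≤ ε * n)
    (h : n • y + k • gm + d ≤ n • x + k • gp + d) :
    ∃ n' k' : ℕ, 0 < n' ∧ (k' : ℚ) ≤ ε * n' ∧ n' • y + k' • gm ≤ n' • x + k' • gp := by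
  obtain ⟨m, hm₁, hm₂⟩ := hg.exists_nsmul d
  -- Scaling `h` by `N` keeps a single `d`, whose cancellation costs `2 * m` copies of the pair;
  -- as `2 * k ≤ ε * n`, the slack `N * ε * n / 2` covers that cost once `N` is large.
  obtain ⟨N, hN⟩ := exists_nat_gt (4 * m / (ε * n))
  have hεn : 0 < ε * n := by positivity
  have hNpos : 0 < N := by
    have : (0 : ℚ) < N := lt_of_le_of_lt (by positivity) hN
    exact_mod_cast this
  refine ⟨N * n, N * k + 2 * m, Nat.mul_pos hNpos hn, ?_, ?_⟩
  · rw [div_lt_iff₀ hεn] at hN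
    push_cast
    nlinarith
  · have h' := add_nsmul_le_add_nsmul_of_add_le_add hm₁ hm₂ (nsmul_add_le_nsmul_add h N)
    simpa only [smul_add, add_nsmul, mul_nsmul', add_assoc] using h'

end OrderedMonoid

section HahnBanach

variable {G : Type*} [AddCommGroup G]

structure IsSublinear (q : G → ℝ) : Prop where
  add_le : ∀ a b, q (a + b) ≤ q a + q b
  nsmul : ∀ n : ℕ, 0 < n → ∀ a, q (n • a) = n * q a

namespace IsSublinear

variable {q : G → ℝ}

lemma map_zero (hq : IsSublinear q) : q 0 = 0 := by
  have h := hq.nsmul 2 two_pos 0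
  rw [smul_zero, Nat.cast_ofNat] at h
  linarith

lemma intCast_mul_le (hq : IsSublinear q) (z : ℤ) (a : G) : z * q a ≤ q (z • a) := by
  obtain ⟨n, rfl | rfl⟩ := z.eq_nat_or_neg
  · rcases n.eq_zero_or_pos with rfl | hn
    · simp [hq.map_zero]
    · rw [natCast_zsmul, hq.nsmul n hn, Int.cast_natCast]
  · rcases n.eq_zero_or_pos with rfl | hn
    · simp [hq.map_zero]
    · have h := hq.add_le a (-a)
      rw [add_neg_cancel, hq.map_zero] at h
      rw [neg_zsmul, natCast_zsmul, ← smul_neg, hq.nsmul n hn, Int.cast_neg, Int.cast_natCast]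
      nlinarith [(Nat.cast_pos (α := ℝ)).mpr hn]

end IsSublinear

def dominatedGraphs (q : G → ℝ) : Set (AddSubgroup (G × ℝ)) := {Γ | ∀ p ∈ Γ, p.2 ≤ q p.1}

variable {q : G → ℝ} {Γ : AddSubgroup (G × ℝ)}

lemma zmultiples_mem_dominatedGraphs (hq : IsSublinear q) (g : G) :
    AddSubgroup.zmultiples (g, q g) ∈ dominatedGraphs q := by
  rintro _ ⟨z, rfl⟩
  simpa [zsmul_eq_mul] using hq.intCast_mul_le z g

lemma eq_of_mem_dominatedGraphs (hq : IsSublinear q) (hΓ : Γ ∈ dominatedGraphs q) {g : G} {t t' : ℝ}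
    (ht : (g, t) ∈ Γ) (ht' : (g, t') ∈ Γ) : t = t' := by
  have h₁ := hΓ _ (Γ.sub_mem ht ht')
  have h₂ := hΓ _ (Γ.sub_mem ht' ht)
  simp only [Prod.fst_sub, Prod.snd_sub, sub_self, hq.map_zero] at h₁ h₂
  linarith

lemma sup_zmultiples_mem_dominatedGraphs (hΓ : Γ ∈ dominatedGraphs q) {g : G} {c : ℝ}
    (hup : ∀ p ∈ Γ, ∀ n : ℕ, 0 < n → p.2 + n * c ≤ q (p.1 + n • g))
    (hlow : ∀ p ∈ Γ, ∀ n : ℕ, 0 < n → p.2 - n * c ≤ q (p.1 - n • g)) :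
    Γ ⊔ AddSubgroup.zmultiples (g, c) ∈ dominatedGraphs q := by
  intro _ hmem
  obtain ⟨p, hp, _, ⟨z, rfl⟩, rfl⟩ := AddSubgroup.mem_sup.mp hmem
  obtain ⟨n, rfl | rfl⟩ := z.eq_nat_or_neg
  · rcases n.eq_zero_or_pos with rfl | hn
    · simpa using hΓ p hp
    · simpa [zsmul_eq_mul] using hup p hp n hn
  · rcases n.eq_zero_or_pos with rfl | hn
    · simpa using hΓ p hp
    · simpa [zsmul_eq_mul, sub_eq_add_neg] using hlow p hp n hn

lemma exists_sup_zmultiples_mem_dominatedGraphs (hq : IsSublinear q) (hΓ : Γ ∈ dominatedGraphs q)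
    (g : G) : ∃ c : ℝ, Γ ⊔ AddSubgroup.zmultiples (g, c) ∈ dominatedGraphs q := by
  set lower : Set ℝ := {r | ∃ p ∈ Γ, ∃ n : ℕ, 0 < n ∧ r = (p.2 - q (p.1 - n • g)) / n}
  set upper : Set ℝ := {r | ∃ p ∈ Γ, ∃ n : ℕ, 0 < n ∧ r = (q (p.1 + n • g) - p.2) / n}
  have hlower : lower.Nonempty := ⟨_, 0, Γ.zero_mem, 1, one_pos, rfl⟩
  have hupper : upper.Nonempty := ⟨_, 0, Γ.zero_mem, 1, one_pos, rfl⟩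
  have hsep : ∀ r ∈ lower, ∀ r' ∈ upper, r ≤ r' := by
    rintro _ ⟨p', hp', m, hm, rfl⟩ _ ⟨p, hp, n, hn, rfl⟩
    have hmem := hΓ _ (Γ.add_mem (Γ.nsmul_mem hp' n) (Γ.nsmul_mem hp m))
    have hsplit : (n • p' + m • p).1 = n • (p'.1 - m • g) + m • (p.1 + n • g) := by
      simp only [Prod.fst_add, Prod.smul_fst, smul_sub, smul_add, smul_smul, mul_comm m n]
      abel
    have hsub := hq.add_le (n • (p'.1 - m • g)) (m • (p.1 + n • g))
    rw [hq.nsmul n hn, hq.nsmul m hm] at hsub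
    rw [hsplit] at hmem
    simp only [Prod.snd_add, Prod.smul_snd, nsmul_eq_mul] at hmem
    rw [div_le_div_iff₀ (by positivity) (by positivity)]
    nlinarith
  obtain ⟨c, hc_low, hc_up⟩ := exists_between_of_forall_le hlower hupper hsep
  refine ⟨c, sup_zmultiples_mem_dominatedGraphs hΓ (fun p hp n hn => ?_) (fun p hp n hn => ?_)⟩
  · have h := hc_up ⟨p, hp, n, hn, rfl⟩
    rw [le_div_iff₀ (by positivity)] at h
    linarith
  · have h := hc_low ⟨p, hp, n, hn, rfl⟩
    rw [div_le_iff₀ (by positivity)] at h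
    linarith

lemma exists_maximal_dominatedGraphs (hΓ : Γ ∈ dominatedGraphs q) :
    ∃ Γ' ≥ Γ, Maximal (· ∈ dominatedGraphs q) Γ' :=
  zorn_le_nonempty₀ _ (fun c hc hchain Γ₀ hΓ₀ => ⟨sSup c, fun p hp => by
      obtain ⟨Γ', hΓ'c, hpΓ'⟩ :=
        (AddSubgroup.mem_sSup_of_directedOn ⟨Γ₀, hΓ₀⟩ hchain.directedOn).mp hp
      exact hc hΓ'c p hpΓ', fun _ => le_sSup⟩) Γ hΓ

lemma exists_mem_of_maximal_dominatedGraphs (hq : IsSublinear q)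
    (hΓ : Maximal (· ∈ dominatedGraphs q) Γ) (g : G) : ∃ t : ℝ, (g, t) ∈ Γ := by
  obtain ⟨c, hc⟩ := exists_sup_zmultiples_mem_dominatedGraphs hq hΓ.prop g
  exact ⟨c, hΓ.eq_of_le hc le_sup_left ▸ AddSubgroup.mem_sup_right (AddSubgroup.mem_zmultiples _)⟩

theorem IsSublinear.exists_addMonoidHom_le_eq (hq : IsSublinear q) (g₀ : G) :
    ∃ s : G →+ ℝ, (∀ a, s a ≤ q a) ∧ s g₀ = q g₀ := by
  obtain ⟨Γ, hΓ₀, hΓ⟩ := exists_maximal_dominatedGraphs (zmultiples_mem_dominatedGraphs hq g₀)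
  choose s hs using exists_mem_of_maximal_dominatedGraphs hq hΓ
  have hs_add (a b : G) : s (a + b) = s a + s b :=
    eq_of_mem_dominatedGraphs hq hΓ.prop (hs (a + b)) (Γ.add_mem (hs a) (hs b))
  refine ⟨AddMonoidHom.mk' s hs_add, fun a => hΓ.prop _ (hs a), ?_⟩
  exact eq_of_mem_dominatedGraphs hq hΓ.prop (hs g₀) (hΓ₀ (AddSubgroup.mem_zmultiples _))

end HahnBanach

section UnitGauge

variable {G : Type*} [AddCommGroup G] {C : AddSubmonoid G} {u : G}

structure IsOrderUnit (C : AddSubmonoid G) (u : G) : Prop where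
  mem : u ∈ C
  exists_nsmul_sub_mem : ∀ w, ∃ n : ℕ, n • u - w ∈ C

namespace IsOrderUnit

lemma zsmul_mem (hu : IsOrderUnit C u) {z : ℤ} (hz : 0 ≤ z) : z • u ∈ C := by
  lift z to ℕ using hz
  simpa using C.nsmul_mem hu.mem z

lemma nonneg_of_zsmul_mem (hu : IsOrderUnit C u) (hC : C ≠ ⊤) {z : ℤ} (hz : z • u ∈ C) : 0 ≤ z := by
  by_contra! hneg
  refine hC (eq_top_iff.mpr fun w _ => ?_)
  obtain ⟨N, hN⟩ := hu.exists_nsmul_sub_mem (-w)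
  have hw : w = (N • u - -w) + N • (z • u) + N • ((-z - 1) • u) := by module
  rw [hw]
  exact C.add_mem (C.add_mem hN (C.nsmul_mem hz N)) (C.nsmul_mem (hu.zsmul_mem (by omega)) N)

end IsOrderUnit

def gaugeSet (C : AddSubmonoid G) (u w : G) : Set ℝ :=
  {r | ∃ (k : ℤ) (n : ℕ), 0 < n ∧ k • u - n • w ∈ C ∧ r = k / n}

noncomputable def unitGauge (C : AddSubmonoid G) (u w : G) : ℝ := sInf (gaugeSet C u w)

lemma gaugeSet_nonempty (hu : IsOrderUnit C u) (w : G) : (gaugeSet C u w).Nonempty := by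
  obtain ⟨N, hN⟩ := hu.exists_nsmul_sub_mem w
  exact ⟨_, N, 1, one_pos, by simpa using hN, rfl⟩

lemma bddBelow_gaugeSet (hu : IsOrderUnit C u) (hC : C ≠ ⊤) (w : G) :
    BddBelow (gaugeSet C u w) := by
  obtain ⟨N, hN⟩ := hu.exists_nsmul_sub_mem (-w)
  refine ⟨-N, ?_⟩
  rintro _ ⟨k, n, hn, hmem, rfl⟩
  have hsum : (k • u - n • w) + n • (N • u - -w) = (k + n * N : ℤ) • u := by module
  have hnonneg := hu.nonneg_of_zsmul_mem hC (hsum ▸ C.add_mem hmem (C.nsmul_mem hN n))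
  rw [le_div_iff₀ (by positivity)]
  have : (0 : ℝ) ≤ k + n * N := by exact_mod_cast hnonneg
  linarith

lemma gaugeSet_add_subset (a b : G) : gaugeSet C u a + gaugeSet C u b ⊆ gaugeSet C u (a + b) := by
  rintro _ ⟨_, ⟨k₁, n₁, hn₁, h₁, rfl⟩, _, ⟨k₂, n₂, hn₂, h₂, rfl⟩, rfl⟩
  refine ⟨k₁ * n₂ + k₂ * n₁, n₁ * n₂, Nat.mul_pos hn₁ hn₂, ?_, ?_⟩
  · have h : n₂ • (k₁ • u - n₁ • a) + n₁ • (k₂ • u - n₂ • b) =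
        (k₁ * n₂ + k₂ * n₁ : ℤ) • u - (n₁ * n₂) • (a + b) := by module
    exact h ▸ C.add_mem (C.nsmul_mem h₁ n₂) (C.nsmul_mem h₂ n₁)
  · push_cast
    field_simp

lemma gaugeSet_nsmul {n : ℕ} (hn : 0 < n) (w : G) :
    gaugeSet C u (n • w) = (n : ℝ) • gaugeSet C u w := by
  ext r
  rw [Set.mem_smul_set]
  constructor
  · rintro ⟨k, m, hm, hmem, rfl⟩
    refine ⟨k / (m * n : ℕ), ⟨k, m * n, Nat.mul_pos hm hn, by rwa [mul_smul], rfl⟩, ?_⟩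
    push_cast
    rw [smul_eq_mul]
    field_simp
  · rintro ⟨_, ⟨k, m, hm, hmem, rfl⟩, rfl⟩
    refine ⟨n * k, m, hm, ?_, ?_⟩
    · have h : n • (k • u - m • w) = (n * k : ℤ) • u - m • n • w := by module
      exact h ▸ C.nsmul_mem hmem n
    · push_cast
      rw [smul_eq_mul, mul_div_assoc]

lemma isSublinear_unitGauge (hu : IsOrderUnit C u) (hC : C ≠ ⊤) : IsSublinear (unitGauge C u) where
  add_le a b := by
    rw [unitGauge, unitGauge, unitGauge, ← csInf_add (gaugeSet_nonempty hu a)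
      (bddBelow_gaugeSet hu hC a) (gaugeSet_nonempty hu b) (bddBelow_gaugeSet hu hC b)]
    exact csInf_le_csInf (bddBelow_gaugeSet hu hC _)
      ((gaugeSet_nonempty hu a).add (gaugeSet_nonempty hu b)) (gaugeSet_add_subset a b)
  nsmul n hn w := by
    rw [unitGauge, unitGauge, gaugeSet_nsmul hn, Real.sInf_smul_of_nonneg n.cast_nonneg,
      smul_eq_mul]

lemma unitGauge_neg_nonpos (hu : IsOrderUnit C u) (hC : C ≠ ⊤) {w : G} (hw : w ∈ C) :
    unitGauge C u (-w) ≤ 0 :=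
  csInf_le_of_le (bddBelow_gaugeSet hu hC _) ⟨0, 1, one_pos, by simpa using hw, by simp⟩ le_rfl

lemma le_unitGauge (hu : IsOrderUnit C u) {w : G} {r : ℝ}
    (h : ∀ (k : ℤ) (n : ℕ), 0 < n → k • u - n • w ∈ C → r * n ≤ k) : r ≤ unitGauge C u w :=
  le_csInf (gaugeSet_nonempty hu w) fun _ ⟨k, n, hn, hmem, hr⟩ => by
    rw [hr, le_div_iff₀ (by positivity)]
    exact h k n hn hmem

lemma nonneg_of_le_unitGauge (hu : IsOrderUnit C u) (hC : C ≠ ⊤) {s : G →+ ℝ}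
    (hs : ∀ a, s a ≤ unitGauge C u a) {w : G} (hw : w ∈ C) : 0 ≤ s w := by
  have h := (hs (-w)).trans (unitGauge_neg_nonpos hu hC hw)
  rw [map_neg] at h
  linarith

end UnitGauge

namespace Algebra.GrothendieckAddGroup

variable {A : Type*} [AddCommMonoid A]

lemma exists_eq_of_sub_of (w : GrothendieckAddGroup A) :
    ∃ a b : A, w = of a - of b := by
  obtain ⟨⟨a, b⟩, h⟩ := (AddLocalization.addMonoidOf (⊤ : AddSubmonoid A)).surj w
  exact ⟨a, b, eq_sub_of_add_eq h⟩

lemma exists_add_eq_add_of_of_eq {a b : A} (h : of a = of b) :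
    ∃ e : A, e + a = e + b := by
  obtain ⟨e, he⟩ := (AddLocalization.addMonoidOf (⊤ : AddSubmonoid A)).eq_iff_exists.mp h
  exact ⟨e, he⟩

end Algebra.GrothendieckAddGroup

section PositiveCone

open Algebra GrothendieckAddGroup

variable {A : Type*} [AddCommMonoid A] [PartialOrder A] [IsOrderedAddMonoid A]

variable (A) in
def positiveCone : AddSubmonoid (GrothendieckAddGroup A) where
  carrier := {w | ∃ a b : A, a ≤ b ∧ of b - of a = w}
  zero_mem' := ⟨0, 0, le_rfl, sub_self _⟩
  add_mem' := by
    rintro _ _ ⟨a, b, hab, rfl⟩ ⟨c, d, hcd, rfl⟩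
    exact ⟨a + c, b + d, add_le_add hab hcd, by simp only [map_add]; abel⟩

lemma sub_mem_positiveCone {a b : A} (h : a ≤ b) : of b - of a ∈ positiveCone A := ⟨a, b, h, rfl⟩

lemma exists_add_le_add_of_sub_mem_positiveCone {a b : A} (h : of b - of a ∈ positiveCone A) :
    ∃ d : A, a + d ≤ b + d := by
  obtain ⟨a', b', hab', heq⟩ := h
  have hof : of (b' + a) = of (b + a') := by
    simpa only [map_add] using sub_eq_sub_iff_add_eq_add.mp heq
  obtain ⟨e, he⟩ := exists_add_eq_add_of_of_eq hof
  refine ⟨a' + e, ?_⟩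
  calc a + (a' + e) ≤ a + (b' + e) := by gcongr
    _ = e + (b' + a) := by abel
    _ = e + (b + a') := he
    _ = b + (a' + e) := by abel

lemma IsGeneratingPair.isOrderUnit {gp gm : A} (hg : IsGeneratingPair gp gm) :
    IsOrderUnit (positiveCone A) (of gp - of gm) where
  mem := sub_mem_positiveCone hg.le
  exists_nsmul_sub_mem w := by
    obtain ⟨a, b, rfl⟩ := exists_eq_of_sub_of w
    obtain ⟨n₁, h₁, -⟩ := hg.exists_nsmul a
    obtain ⟨n₂, -, h₂⟩ := hg.exists_nsmul b
    refine ⟨n₁ + n₂, (n₁ + n₂) • gm + a, (n₁ + n₂) • gp + b, ?_, ?_⟩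
    · calc (n₁ + n₂) • gm + a = (a + n₁ • gm) + n₂ • gm := by rw [add_nsmul]; abel
        _ ≤ n₁ • gp + (n₂ • gp + b) := by gcongr
        _ = (n₁ + n₂) • gp + b := by rw [add_nsmul]; abel
    · simp only [map_add, map_nsmul]
      module

end PositiveCone

section HardDirection

open Algebra GrothendieckAddGroup

variable {A : Type*} [AddCommMonoid A] [PartialOrder A] [IsOrderedAddMonoid A] {gp gm x y : A}
  {ε : ℚ}

lemma nsmul_add_nsmul_notMem_positiveCone (hg : IsGeneratingPair gp gm) (hε : 0 < ε)
    (hfail : ∀ n k : ℕ, 0 < n → (k : ℚ) ≤ ε * n → ¬n • y + k • gm ≤ n • x + k • gp)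
    {n k : ℕ} (hn : 0 < n) (hk : 2 * k ≤ ε * n) :
    n • (of x - of y) + k • (of gp - of gm) ∉ positiveCone A := by
  intro hmem
  have hof : n • (of x - of y) + k • (of gp - of gm) =
      of (n • x + k • gp) - of (n • y + k • gm) := by
    simp only [map_add, map_nsmul]
    module
  obtain ⟨d, hd⟩ := exists_add_le_add_of_sub_mem_positiveCone (hof ▸ hmem)
  obtain ⟨n', k', hn', hk', h⟩ := exists_nsmul_le_of_add_le_add hg hε hn hk hd
  exact hfail n' k' hn' hk' h

lemma div_two_le_unitGauge (hg : IsGeneratingPair gp gm) (hε : 0 < ε)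
    (hfail : ∀ n k : ℕ, 0 < n → (k : ℚ) ≤ ε * n → ¬n • y + k • gm ≤ n • x + k • gp) :
    (ε / 2 : ℝ) ≤ unitGauge (positiveCone A) (of gp - of gm) (of y - of x) := by
  have hu := hg.isOrderUnit
  refine le_unitGauge hu fun k n hn hmem => ?_
  by_contra! hlt
  rcases lt_or_ge k 0 with hk | hk
  · refine nsmul_add_nsmul_notMem_positiveCone hg hε hfail hn (k := 0)
      (by simpa using by positivity) ?_
    have h : k • (of gp - of gm) - n • (of y - of x) + (-k) • (of gp - of gm) =
        n • (of x - of y) + (0 : ℕ) • (of gp - of gm) := by module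
    exact h ▸ (positiveCone A).add_mem hmem (hu.zsmul_mem (by omega))
  · lift k to ℕ using hk
    refine nsmul_add_nsmul_notMem_positiveCone hg hε hfail hn (k := k) ?_ ?_
    · push_cast at hlt
      have h : ((2 * k : ℚ) : ℝ) ≤ ((ε * n : ℚ) : ℝ) := by push_cast; linarith
      exact_mod_cast h
    · have h : (k : ℤ) • (of gp - of gm) - n • (of y - of x) =
          n • (of x - of y) + k • (of gp - of gm) := by module
      exact h ▸ hmem

theorem exists_monotone_addMonoidHom_lt (hg : IsGeneratingPair gp gm) (hε : 0 < ε)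
    (hfail : ∀ n k : ℕ, 0 < n → (k : ℚ) ≤ ε * n → ¬n • y + k • gm ≤ n • x + k • gp) :
    ∃ f : A →+ ℝ, Monotone f ∧ f x < f y := by
  have hu := hg.isOrderUnit
  have hC : positiveCone A ≠ ⊤ := fun htop =>
    nsmul_add_nsmul_notMem_positiveCone hg hε hfail one_pos (k := 0) (by simpa using hε.le)
      (htop ▸ AddSubmonoid.mem_top _)
  obtain ⟨s, hs_le, hs_eq⟩ := (isSublinear_unitGauge hu hC).exists_addMonoidHom_le_eq (of y - of x)
  refine ⟨s.comp of, fun a b hab => ?_, ?_⟩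
  · have h := nonneg_of_le_unitGauge hu hC hs_le (sub_mem_positiveCone hab)
    rw [map_sub] at h
    exact sub_nonneg.mp h
  · have h := hs_eq ▸ div_two_le_unitGauge hg hε hfail
    rw [map_sub] at h
    have : (0 : ℝ) < ε / 2 := by positivity
    simp only [AddMonoidHom.coe_comp, Function.comp_apply]
    linarith

end HardDirection

/-- Let `A` be an ordered commutative monoid with generating pair `(g₊, g₋)`.
For `x, y ∈ A` the following are equivalent:
(1) for every rational `ε > 0` there are `n, k ∈ ℕ` with `n > 0`, `k ≤ ε·n` and
    `n • x + k • g₊ ≥ n • y + k • g₋`;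
(2) `f x ≥ f y` for every functional `f : A → ℝ` (additive, order-preserving, `f 0 = 0`). -/
theorem stmt15 {A : Type*} [AddCommMonoid A] [PartialOrder A] [IsOrderedAddMonoid A]
    (gp gm : A) (hge : gm ≤ gp)
    (hgen : ∀ x : A, ∃ n : ℕ, x + n • gm ≤ n • gp ∧ n • gm ≤ n • gp + x)
    (x y : A) :
    (∀ e : ℚ, 0 < e → ∃ n k : ℕ, 0 < n ∧ (k : ℚ) ≤ e * n ∧
      n • y + k • gm ≤ n • x + k • gp) ↔
    (∀ f : A → ℝ,
      (∀ a b : A, f (a + b) = f a + f b) → f 0 = 0 →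
      (∀ a b : A, a ≤ b → f a ≤ f b) →
      f y ≤ f x) := by
  refine ⟨fun h f hf_add _ hf_mono =>
    le_of_forall_exists_nsmul_add_le (AddMonoidHom.mk' f hf_add) (fun a b => hf_mono a b) hge h,
    fun h => ?_⟩
  by_contra! hcon
  obtain ⟨ε, hε, hfail⟩ := hcon
  obtain ⟨f, hf_mono, hf⟩ := exists_monotone_addMonoidHom_lt ⟨hge, hgen⟩ hε hfail
  exact (h f (map_add f) (map_zero f) (fun a b hab => hf_mono hab)).not_gt hf
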